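/- Let α ∈ (-π, π] with tan(α) irrational (and cos(α) ≠ 0). For a billiard trajectory in the unit square [0,1]² given by the unfolding construction x(t) = fold(x₀ + t cos α), y(t) = fold(y₀ + t sin α), where fold(s) = s mod 2 if s mod 2 ≤ 1 and 2 - (s mod 2) otherwise, the set of points { y(t) : t ∈ ℝ, x(t) = 0 } is dense in [0,1]. -/

import Mathlib

open Real Set

/-- The 2-periodic folding map of `ℝ` onto `[0,1]`. -/
noncomputable def fold (s : ℝ) : ℝ :=
  if s - 2 * ⌊s / 2⌋ ≤ 1 then s - 2 * ⌊s / 2⌋ else 2 - (s - 2 * ⌊s / 2⌋)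

lemma fold_even (n : ℤ) : fold (2 * n) = 0 := by
  have h : ((2 * n : ℝ) / 2) = (n : ℝ) := by ring
  simp [fold, h, Int.floor_intCast]

lemma fold_add_two_int (s : ℝ) (m : ℤ) : fold (s + 2 * m) = fold s := by
  have h : (s + 2 * m) / 2 = s / 2 + m := by ring
  have hf : ⌊(s + 2 * m) / 2⌋ = ⌊s / 2⌋ + m := by
    rw [h, Int.floor_add_intCast]
  unfold fold
  rw [hf]
  push_cast
  ring_nf

lemma fold_close (x e : ℝ) (hx : x ∈ Icc (0 : ℝ) 1) (he : |e| ≤ 1) :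
    |fold (x + e) - x| ≤ |e| := by
  obtain ⟨hx0, hx1⟩ := hx
  have he1 : -1 ≤ e := (abs_le.mp he).1
  have he2 : e ≤ 1 := (abs_le.mp he).2
  set u := x + e with hu
  have hue : |e| = |u - x| := by rw [hu]; ring_nf
  rcases lt_or_ge u 0 with h0 | h0
  · -- u ∈ [-1, 0), fold u = -u
    have hum : -1 ≤ u := by rw [hu]; linarith
    have hfl : ⌊u / 2⌋ = -1 := by
      have : ((-1 : ℤ) : ℝ) ≤ u / 2 ∧ u / 2 < (-1 : ℤ) + 1 := by
        push_cast; constructor <;> linarith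
      exact Int.floor_eq_iff.mpr this
    have hfold : fold u = -u := by
      unfold fold
      rw [hfl]
      rcases eq_or_lt_of_le hum with h | h
      · rw [if_pos (by push_cast; linarith)]; push_cast; linarith
      · rw [if_neg (by push_cast; linarith)]; push_cast; ring
    rw [hfold, hue, abs_le]
    have h1 : |u - x| = x - u := by rw [abs_of_nonpos (by linarith)]; ring
    rw [h1]
    constructor <;> linarith
  · rcases le_or_gt u 1 with h1 | h1
    · -- u ∈ [0,1], fold u = u
      have hfl : ⌊u / 2⌋ = 0 := by
        apply Int.floor_eq_zero_iff.mpr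
        constructor
        · linarith
        · show u / 2 < 1; linarith
      have hfold : fold u = u := by
        unfold fold
        rw [hfl]
        simp only [Int.cast_zero, mul_zero, sub_zero]
        rw [if_pos h1]
      rw [hfold, hue]
    · -- u ∈ (1, 2], fold u = 2 - u
      have hu2 : u ≤ 2 := by rw [hu]; linarith
      have hfold : fold u = 2 - u := by
        rcases eq_or_lt_of_le hu2 with h | h
        · have : u = 2 * ((1 : ℤ) : ℝ) := by push_cast; linarith
          rw [this, fold_even]; push_cast; linarith
        · have hfl : ⌊u / 2⌋ = 0 := by
            apply Int.floor_eq_zero_iff.mpr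
            constructor
            · linarith
            · show u / 2 < 1; linarith
          unfold fold
          rw [hfl]
          simp only [Int.cast_zero, mul_zero, sub_zero]
          rw [if_neg (by linarith)]
      rw [hfold, hue, abs_le]
      have h2 : |u - x| = u - x := by rw [abs_of_nonneg (by linarith)]
      rw [h2]
      constructor <;> linarith

/-- The subgroup `ℤ + ℤτ` of `ℝ`. -/
def intLattice (τ : ℝ) : AddSubgroup ℝ where
  carrier := {x | ∃ m n : ℤ, x = (m : ℝ) + n * τ}
  zero_mem' := ⟨0, 0, by push_cast; ring⟩
  add_mem' := by
    rintro a b ⟨m, n, rfl⟩ ⟨m', n', rfl⟩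
    exact ⟨m + m', n + n', by push_cast; ring⟩
  neg_mem' := by
    rintro a ⟨m, n, rfl⟩
    exact ⟨-m, -n, by push_cast; ring⟩

lemma intLattice_dense {τ : ℝ} (hirr : Irrational τ) :
    Dense ((intLattice τ : AddSubgroup ℝ) : Set ℝ) := by
  rcases (intLattice τ).dense_or_cyclic with h | ⟨a, ha⟩
  · exact h
  · exfalso
    have h1 : (1 : ℝ) ∈ intLattice τ := ⟨1, 0, by push_cast; ring⟩
    have hτ : τ ∈ intLattice τ := ⟨0, 1, by push_cast; ring⟩
    rw [ha] at h1 hτ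
    obtain ⟨k, hk⟩ := AddSubgroup.mem_closure_singleton.mp h1
    obtain ⟨l, hl⟩ := AddSubgroup.mem_closure_singleton.mp hτ
    have hk0 : (k : ℝ) ≠ 0 := by
      intro h
      rw [zsmul_eq_mul, h, zero_mul] at hk
      exact one_ne_zero hk.symm
    apply hirr
    refine ⟨(l : ℚ) / (k : ℚ), ?_⟩
    rw [zsmul_eq_mul] at hk hl
    have ha' : a = 1 / (k : ℝ) := by field_simp; linarith [hk]
    rw [← hl, ha']
    push_cast
    field_simp

theorem stmt_11 (α x₀ y₀ : ℝ) (hα : α ∈ Ioc (-π) π) (hcos : Real.cos α ≠ 0)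
    (hirr : Irrational (Real.tan α)) (hx₀ : x₀ ∈ Icc (0 : ℝ) 1)
    (hy₀ : y₀ ∈ Icc (0 : ℝ) 1) :
    Icc (0 : ℝ) 1 ⊆
      closure {y : ℝ | ∃ t : ℝ, fold (x₀ + t * Real.cos α) = 0 ∧
        y = fold (y₀ + t * Real.sin α)} := by
  intro x hx
  set τ := Real.tan α with hτ
  set c := y₀ - x₀ * τ with hc
  rw [Metric.mem_closure_iff]
  intro ε hε
  -- find lattice point close to (x - c)/2
  set δ := min ε 1 with hδ
  have hδ0 : 0 < δ := lt_min hε one_pos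
  have hdense := intLattice_dense hirr
  have hmem : (x - c) / 2 ∈ closure ((intLattice τ : AddSubgroup ℝ) : Set ℝ) := by
    rw [hdense.closure_eq]; trivial
  rw [Metric.mem_closure_iff] at hmem
  obtain ⟨g, hg, hgd⟩ := hmem (δ / 2) (by linarith)
  obtain ⟨m, n, rfl⟩ := hg
  -- the time when the trajectory hits x = 0
  set t : ℝ := (2 * n - x₀) / Real.cos α with ht
  have htc : x₀ + t * Real.cos α = 2 * (n : ℝ) := by
    rw [ht]; field_simp; ring
  have hts : y₀ + t * Real.sin α = c + 2 * n * τ := by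
    rw [ht, hc, hτ, Real.tan_eq_sin_div_cos]
    field_simp
    ring
  set e : ℝ := c + 2 * n * τ + 2 * m - x with heq
  have hed : |e| < δ := by
    have : dist ((x - c) / 2) ((m : ℝ) + n * τ) = |e| / 2 := by
      rw [Real.dist_eq, heq]
      rw [show (x - c) / 2 - ((m : ℝ) + n * τ) = -(e / 2) by ring, abs_neg, abs_div]
      simp [abs_of_nonneg]
      rw [heq]
    rw [this] at hgd
    linarith
  have hfoldy : fold (y₀ + t * Real.sin α) = fold (x + e) := by
    rw [hts, show c + 2 * (n : ℝ) * τ = (c + 2 * n * τ + 2 * m) + 2 * (-m : ℤ) by push_cast; ring,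
      fold_add_two_int, show c + 2 * (n : ℝ) * τ + 2 * m = x + e by rw [heq]; ring]
  refine ⟨fold (y₀ + t * Real.sin α), ⟨t, ?_, rfl⟩, ?_⟩
  · rw [htc, fold_even]
  · rw [hfoldy, Real.dist_eq]
    have h1 : |fold (x + e) - x| ≤ |e| :=
      fold_close x e hx (by linarith [min_le_right ε 1])
    have h2 : |x - fold (x + e)| = |fold (x + e) - x| := abs_sub_comm _ _
    rw [h2]
    calc |fold (x + e) - x| ≤ |e| := h1
      _ < δ := hed
      _ ≤ ε := min_le_left ε 1
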